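/- Let F be a subfield of ℝ, a ∈ F, and K = [a, ∞). Suppose f ∈ F[x] is nonnegative on K and f(c) = 0 for some c in the interior of K. Then the square of the minimal polynomial g of c over F divides f in F[x], and f/g² is again nonnegative on K. -/

import Mathlib

/-!
At an interior zero `c` the polynomial `f ≥ 0` has a local minimum, so `f' (c) = 0` as well.
Since `f` and `f'` both have coefficients in `F`, the minimal polynomial `g` of `c` divides both,
and as `g` is separable (characteristic zero) this forces `g² ∣ f`. Finally `f = g² h` with
`g² > 0` off the finitely many roots of `g`, so `h ≥ 0` there and hence everywhere on `[a, ∞)`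
by continuity.
-/

open Polynomial Filter Topology

noncomputable def pev (F : Subfield ℝ) (f : F[X]) (x : ℝ) : ℝ := Polynomial.aeval x f

/-- `σ` is a finite sum of terms `t·g²` with `t ∈ F`, `t ≥ 0`, `g ∈ F[x]`. -/
def SumWtSq (F : Subfield ℝ) (σ : F[X]) : Prop :=
  ∃ (n : ℕ) (t : Fin n → F) (g : Fin n → F[X]),
    (∀ i, (0:ℝ) ≤ (t i : ℝ)) ∧ σ = ∑ i, C (t i) * g i ^ 2

theorem pev_eq_eval_map (F : Subfield ℝ) (f : F[X]) (x : ℝ) :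
    pev F f x = (f.map (algebraMap F ℝ)).eval x :=
  eval_map_algebraMap f x |>.symm

theorem Polynomial.Separable.sq_dvd_of_dvd_derivative {R : Type*} [CommRing R] {g f : R[X]}
    (hg : g.Separable) (hf : g ∣ f) (hf' : g ∣ derivative f) : g ^ 2 ∣ f := by
  obtain ⟨q, rfl⟩ := hf
  have hgq : g ∣ derivative g * q := by
    rw [derivative_mul] at hf'
    exact (dvd_add_left (dvd_mul_right g _)).mp hf'
  obtain ⟨r, rfl⟩ := hg.dvd_of_dvd_mul_left hgq
  exact ⟨r, by ring⟩

theorem minpoly_sq_dvd_of_isLocalMin {F : Type*} [Field F] [CharZero F] [Algebra F ℝ]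
    {f : F[X]} {c : ℝ} (hc : IsIntegral F c) (hfc : aeval c f = 0)
    (hmin : IsLocalMin (fun x => aeval x f) c) : minpoly F c ^ 2 ∣ f := by
  have hf' : aeval c (derivative f) = 0 := by
    simpa only [Polynomial.deriv_aeval] using hmin.deriv_eq_zero
  exact (minpoly.irreducible hc).separable.sq_dvd_of_dvd_derivative
    (minpoly.dvd F c hfc) (minpoly.dvd F c hf')

theorem Polynomial.eval_nonneg_of_sq_mul {p q : ℝ[X]} (hq : q ≠ 0) {a : ℝ}
    (h : ∀ x, a ≤ x → 0 ≤ (q ^ 2 * p).eval x) (x : ℝ) (hx : a ≤ x) : 0 ≤ p.eval x := by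
  refine ge_of_tendsto (p.continuous.continuousWithinAt (s := Set.Ioi x)).tendsto ?_
  filter_upwards [self_mem_nhdsWithin,
    nhdsGT_le_nhdsNE x (nhdsNE_le_cofinite x (eventually_cofinite_not_isRoot hq))]
    with y (hxy : x < y) hqy
  have hy := h y (hx.trans hxy.le)
  rw [eval_mul, eval_pow] at hy
  exact nonneg_of_mul_nonneg_right hy (sq_pos_of_ne_zero hqy)

theorem stmt15 (F : Subfield ℝ) (a : F) (f : F[X])
    (hf : ∀ x : ℝ, (a:ℝ) ≤ x → 0 ≤ pev F f x)
    (c : ℝ) (hc : (a:ℝ) < c) (hfc : pev F f c = 0) :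
    ∃ h : F[X], f = (minpoly F c) ^ 2 * h ∧ ∀ x : ℝ, (a:ℝ) ≤ x → 0 ≤ pev F h x := by
  by_cases hf0 : f = 0
  · exact ⟨0, by simp [hf0], fun x _ => by simp [pev]⟩
  have hint : IsIntegral F c := isAlgebraic_iff_isIntegral.mp ⟨f, hf0, hfc⟩
  have hmin : IsLocalMin (fun x => aeval x f) c :=
    eventually_of_mem (Ioi_mem_nhds hc) fun y hy => hfc.trans_le (hf y hy.le)
  obtain ⟨h, rfl⟩ := minpoly_sq_dvd_of_isLocalMin hint hfc hmin
  have hg : (minpoly F c).map (algebraMap F ℝ) ≠ 0 := Polynomial.map_ne_zero (minpoly.ne_zero hint)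
  refine ⟨h, rfl, ?_⟩
  simp only [pev_eq_eval_map, Polynomial.map_mul, Polynomial.map_pow] at hf ⊢
  exact eval_nonneg_of_sq_mul hg hf
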